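/- Let d ≥ 2 be an integer, let E : Fin d → ℝ (a Hamiltonian/energy function) and let T > 0. Define the Gibbs distribution p i = exp(-E i / T) / (∑ j, exp(-E j / T)). Then the heat capacity, equal to the rescaled energy variance (∑ i, p i · (E i)² - (∑ i, p i · E i)²) / T², is at most N(d), and in particular is strictly less than (1/4)·(log(d-1))² + 1. -/

import Mathlib

open scoped ENNReal BigOperators

noncomputable section

/-- Binary entropy (natural log), with Lean's convention `Real.log 0 = 0`. -/
def binEntropy' (x : ℝ) : ℝ := -(x * Real.log x) - (1 - x) * Real.log (1 - x)

/-- Binary relative entropy, valued in `[0,∞]`. -/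
def binRelEntropy (x y : ℝ) : ℝ≥0∞ :=
  if (y = 0 ∧ 0 < x) ∨ (y = 1 ∧ x < 1) then ⊤
  else ENNReal.ofReal (x * Real.log (x / y) + (1 - x) * Real.log ((1 - x) / (1 - y)))

/-- `M(Δ,d)`: infimum of binary relative entropies under the entropy-difference constraint. -/
def Mfun (Δ : ℝ) (d : ℕ) : ℝ≥0∞ :=
  sInf {m : ℝ≥0∞ | ∃ s r : ℝ, s ∈ Set.Icc (0:ℝ) (((d:ℝ) - 1) / d) ∧
    r ∈ Set.Icc (0:ℝ) (((d:ℝ) - 1) / d) ∧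
    binEntropy' s - binEntropy' r + (s - r) * Real.log ((d:ℝ) - 1) = Δ ∧
    m = binRelEntropy s r}

/-- Shannon entropy of a probability vector on `Fin d` (natural log). -/
def shEntropy {d : ℕ} (p : Fin d → ℝ) : ℝ := ∑ i, -(p i * Real.log (p i))

/-- Relative entropy between probability vectors on `Fin d`, valued in `[0,∞]`. -/
def relEntropy {d : ℕ} (p q : Fin d → ℝ) : ℝ≥0∞ :=
  if ∀ i, q i = 0 → p i = 0
  then ENNReal.ofReal (∑ i, p i * Real.log (p i / q i))
  else ⊤

/-- `N(d) = sup_{0<r<1/2} r(1-r) (log(((1-r)/r)(d-1)))²`. -/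
def Nfun (d : ℕ) : ℝ :=
  sSup {v : ℝ | ∃ r : ℝ, 0 < r ∧ r < 1/2 ∧
    v = r * (1 - r) * (Real.log ((1 - r) / r * ((d:ℝ) - 1)))^2}

/-!
With `E i = -T (log p i + log Z)`, the heat capacity is the variance of `log p` under `p`. This
variance is continuous on the probability simplex, so it has a maximiser `m`, and perturbing `m`
along `e i - e j` shows that `log m` takes at most two values `a`, `b` on the support of `m`. If
they are taken on `n₁` and `n₂` atoms of total masses `P` and `1 - P`, the variance is
`P (1 - P) (a - b)²`, and `n₁ + n₂ ≤ d` bounds `|a - b|` by `log ((1 - P) / P * (d - 1))` when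
`P ≤ 1/2`: this is the function whose supremum is `N(d)`. It extends continuously to `[0, 1/2]`,
so the supremum is attained, and `x < sinh x` makes it pointwise smaller than
`log (d - 1)² / 4 + 1`.
-/

open Real Set

lemma sq_mul_exp_lt_exp_sub_one_sq {g : ℝ} (hg : 0 < g) : g ^ 2 * exp g < (exp g - 1) ^ 2 := by
  have hsinh : g / 2 < sinh (g / 2) := self_lt_sinh_iff.2 (by linarith)
  have ha : 0 < exp (g / 2) := exp_pos _
  have hsq : exp g = exp (g / 2) ^ 2 := by rw [← exp_nat_mul]; ring_nf
  rw [sinh_eq, exp_neg] at hsinh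
  have hlin : g * exp (g / 2) < exp g - 1 := by
    rw [hsq]
    have := mul_lt_mul_of_pos_right hsinh ha
    field_simp at this
    linarith
  have : 0 < g * exp (g / 2) := mul_pos hg ha
  nlinarith [hsq]

lemma log_sq_mul_lt_sq {r : ℝ} (h0 : 0 < r) (h1 : r < 1 / 2) :
    log ((1 - r) / r) ^ 2 * (r * (1 - r)) < (1 - 2 * r) ^ 2 := by
  have hpos : 0 < log ((1 - r) / r) := log_pos ((one_lt_div h0).2 (by linarith))
  have h := sq_mul_exp_lt_exp_sub_one_sq hpos
  rw [exp_log (div_pos (by linarith) h0), div_sub_one h0.ne'] at h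
  have h' := mul_lt_mul_of_pos_right h (pow_pos h0 3)
  field_simp at h'
  nlinarith

lemma mul_sq_log_add_lt {r L : ℝ} (h0 : 0 < r) (h1 : r < 1 / 2) :
    r * (1 - r) * (log ((1 - r) / r) + L) ^ 2 < L ^ 2 / 4 + 1 := by
  -- Cauchy–Schwarz with weights `1 - 4 r (1 - r)` and `4 r (1 - r)`, then `log_sq_mul_lt_sq`.
  have hB := log_sq_mul_lt_sq h0 h1
  set g := log ((1 - r) / r)
  nlinarith [sq_nonneg ((1 - 4 * (r * (1 - r))) * L - 4 * g * (r * (1 - r))), sq_nonneg (1 - 2 * r),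
    mul_pos h0 (show (0 : ℝ) < 1 - r by linarith)]

lemma continuousOn_mul_log_sq : ContinuousOn (fun x : ℝ => x * log x ^ 2) (Ici 0) := by
  have hc : Continuous fun x : ℝ => 4 * (√x * log √x) ^ 2 :=
    continuous_const.mul ((continuous_mul_log.comp continuous_sqrt).pow 2)
  refine hc.continuousOn.congr fun x (hx : 0 ≤ x) => ?_
  simp only [log_sqrt hx]
  nlinarith [sq_sqrt hx]

lemma hasDerivAt_mul_log_sq {x : ℝ} (hx : x ≠ 0) :
    HasDerivAt (fun x => x * log x ^ 2) (log x ^ 2 + 2 * log x) x :=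
  ((hasDerivAt_id' x).fun_mul ((hasDerivAt_log hx).fun_pow 2)).congr_deriv (by field_simp; ring)

def Nprofile (d : ℕ) (r : ℝ) : ℝ := r * (1 - r) * log ((1 - r) / r * ((d : ℝ) - 1)) ^ 2

section Nprofile

variable {d : ℕ}

lemma one_le_natCast_sub_one (hd : 2 ≤ d) : (1 : ℝ) ≤ (d : ℝ) - 1 := by
  have : (2 : ℝ) ≤ d := by exact_mod_cast hd
  linarith

@[simp] lemma Nprofile_zero : Nprofile d 0 = 0 := by simp [Nprofile]

lemma Nprofile_half : Nprofile d (1 / 2) = log ((d : ℝ) - 1) ^ 2 / 4 := by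
  norm_num [Nprofile]; ring

lemma Nprofile_lt (hd : 2 ≤ d) {r : ℝ} (h0 : 0 < r) (h1 : r < 1 / 2) :
    Nprofile d r < log ((d : ℝ) - 1) ^ 2 / 4 + 1 := by
  have hd1 := one_le_natCast_sub_one hd
  rw [Nprofile, log_mul (div_pos (by linarith) h0).ne' (by positivity)]
  exact mul_sq_log_add_lt h0 h1

lemma continuousOn_Nprofile (hd : 2 ≤ d) : ContinuousOn (Nprofile d) (Icc 0 (1 / 2)) := by
  have hd1 := one_le_natCast_sub_one hd
  -- Isolate the singular part of the logarithm in `r log r` and `r log² r`, continuous at `0`.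
  set c : ℝ → ℝ := fun r => log ((1 - r) * ((d : ℝ) - 1))
  have hc : ContinuousOn c (Icc 0 (1 / 2)) := by
    refine ContinuousOn.log (by fun_prop) fun r hr => ?_
    have : 0 < 1 - r := by linarith [hr.2]
    positivity
  have hcont : ContinuousOn
      (fun r => (1 - r) * (r * log r ^ 2 - 2 * c r * (r * log r) + r * c r ^ 2)) (Icc 0 (1 / 2)) :=
    (continuous_const.sub continuous_id).continuousOn.mul
      (((continuousOn_mul_log_sq.mono Icc_subset_Ici_self).sub
        ((continuousOn_const.mul hc).mul continuous_mul_log.continuousOn)).add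
        (continuous_id.continuousOn.mul (hc.pow 2)))
  refine hcont.congr fun r hr => ?_
  rcases hr.1.eq_or_lt with rfl | h0
  · simp
  · have : 0 < 1 - r := by linarith [hr.2]
    simp only [Nprofile, c]
    rw [div_mul_eq_mul_div, log_div (by positivity) h0.ne']
    ring

lemma exists_isMaxOn_Nprofile_eq_Nfun (hd : 2 ≤ d) :
    ∃ r₀ ∈ Icc (0 : ℝ) (1 / 2), IsMaxOn (Nprofile d) (Icc 0 (1 / 2)) r₀ ∧ Nfun d = Nprofile d r₀ := by
  have hcont := continuousOn_Nprofile hd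
  obtain ⟨r₀, hr₀, hmax⟩ :=
    isCompact_Icc.exists_isMaxOn (nonempty_Icc.2 (by norm_num)) hcont
  refine ⟨r₀, hr₀, hmax, IsLUB.csSup_eq ?_ ⟨_, 1 / 4, by norm_num, by norm_num, rfl⟩⟩
  refine isLUB_of_mem_closure ?_ ?_
  · rintro _ ⟨r, h0, h1, rfl⟩
    exact hmax ⟨h0.le, h1.le⟩
  · refine ((hcont r₀ hr₀).mono Ioo_subset_Icc_self).mem_closure ?_ fun r hr => ⟨r, hr.1, hr.2, rfl⟩
    rwa [closure_Ioo (by norm_num)]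

lemma Nprofile_le_Nfun (hd : 2 ≤ d) {r : ℝ} (hr : r ∈ Icc (0 : ℝ) (1 / 2)) :
    Nprofile d r ≤ Nfun d := by
  obtain ⟨r₀, -, hmax, hN⟩ := exists_isMaxOn_Nprofile_eq_Nfun hd
  exact hN ▸ hmax hr

lemma Nfun_nonneg (hd : 2 ≤ d) : 0 ≤ Nfun d := by
  simpa using Nprofile_le_Nfun hd (r := 0) (by norm_num)

lemma Nfun_lt_quarter_log_sq_add_one (hd : 2 ≤ d) : Nfun d < 1 / 4 * log ((d : ℝ) - 1) ^ 2 + 1 := by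
  obtain ⟨r₀, hr₀, -, hN⟩ := exists_isMaxOn_Nprofile_eq_Nfun hd
  rw [hN]
  rcases hr₀.1.eq_or_lt with rfl | h0
  · simp only [Nprofile_zero]; positivity
  rcases hr₀.2.eq_or_lt with rfl | h1
  · rw [Nprofile_half]; linarith
  · linarith [Nprofile_lt hd h0 h1]

end Nprofile

section TwoLevels

variable {d : ℕ}

lemma mul_sq_log_ratio_le_Nprofile {n₁ n₂ : ℕ} (h₁ : 1 ≤ n₁) (h₂ : 1 ≤ n₂)
    (hn : n₁ + n₂ ≤ d) {P : ℝ} (hP0 : 0 < P) (hPh : P ≤ 1 / 2) :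
    P * (1 - P) * log (P * n₂ / ((1 - P) * n₁)) ^ 2 ≤ Nprofile d P := by
  have h1P : 0 < 1 - P := by linarith
  have hn₁ : (1 : ℝ) ≤ n₁ := by exact_mod_cast h₁
  have hn₂ : (1 : ℝ) ≤ n₂ := by exact_mod_cast h₂
  have hnd : (n₁ : ℝ) + n₂ ≤ d := by exact_mod_cast hn
  have hratio₁ : (n₂ : ℝ) / n₁ ≤ d - 1 := (div_le_self (by positivity) hn₁).trans (by linarith)
  have hratio₂ : (n₁ : ℝ) / n₂ ≤ d - 1 := (div_le_self (by positivity) hn₂).trans (by linarith)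
  have hP₁ : P / (1 - P) ≤ 1 := (div_le_one h1P).2 (by linarith)
  have hP₂ : 1 ≤ (1 - P) / P := (one_le_div hP0).2 (by linarith)
  set x := P * n₂ / ((1 - P) * n₁)
  set Y := (1 - P) / P * ((d : ℝ) - 1)
  have hx : x = P / (1 - P) * (n₂ / n₁) := mul_div_mul_comm _ _ _ _
  have hx0 : 0 < x := by positivity
  have hxY : x ≤ Y := by
    rw [hx]
    calc P / (1 - P) * (n₂ / n₁) ≤ 1 * ((d : ℝ) - 1) :=
          mul_le_mul hP₁ hratio₁ (by positivity) zero_le_one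
      _ ≤ Y := mul_le_mul_of_nonneg_right hP₂ (by linarith)
  have hxY' : x⁻¹ ≤ Y := by
    rw [hx, mul_inv, inv_div, inv_div]
    exact mul_le_mul_of_nonneg_left hratio₂ (by positivity)
  have hlog : log x ^ 2 ≤ log Y ^ 2 := by
    refine sq_le_sq' ?_ (log_le_log hx0 hxY)
    rw [neg_le, ← log_inv]
    exact log_le_log (by positivity) hxY'
  exact mul_le_mul_of_nonneg_left hlog (by positivity)

lemma mul_mul_sq_sub_le_Nfun (hd : 2 ≤ d) {n₁ n₂ : ℕ} (hn : n₁ + n₂ ≤ d) {a b : ℝ}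
    (hsum : n₁ * exp a + n₂ * exp b = 1) :
    n₁ * exp a * (n₂ * exp b) * (a - b) ^ 2 ≤ Nfun d := by
  wlog hP : n₁ * exp a ≤ 1 / 2 generalizing n₁ n₂ a b
  · calc n₁ * exp a * (n₂ * exp b) * (a - b) ^ 2 = n₂ * exp b * (n₁ * exp a) * (b - a) ^ 2 := by
          ring
      _ ≤ Nfun d := this (by omega) (by linarith) (by linarith)
  rcases Nat.eq_zero_or_pos n₁ with rfl | h₁
  · simpa using Nfun_nonneg hd
  rcases Nat.eq_zero_or_pos n₂ with rfl | h₂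
  · simpa using Nfun_nonneg hd
  set P := n₁ * exp a
  have hP0 : 0 < P := by positivity
  have hQ : n₂ * exp b = 1 - P := by linarith
  have hab : log (P * n₂ / ((1 - P) * n₁)) = a - b := by
    rw [← hQ, ← log_exp (a - b), exp_sub]
    congr 1
    simp only [P]
    field_simp
  rw [hQ, ← hab]
  exact (mul_sq_log_ratio_le_Nprofile h₁ h₂ hn hP0 hP).trans (Nprofile_le_Nfun hd ⟨hP0.le, hP⟩)

end TwoLevels

section LogVariance

variable {ι : Type*} [Fintype ι]

lemma sum_mul_affine_sq_sub_sq {w x : ι → ℝ} (hw : ∑ i, w i = 1) (a b : ℝ) :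
    ∑ i, w i * (a * x i + b) ^ 2 - (∑ i, w i * (a * x i + b)) ^ 2 =
      a ^ 2 * (∑ i, w i * x i ^ 2 - (∑ i, w i * x i) ^ 2) := by
  have h2 : ∑ i, w i * (a * x i + b) ^ 2 =
      a ^ 2 * ∑ i, w i * x i ^ 2 + 2 * a * b * ∑ i, w i * x i + b ^ 2 * ∑ i, w i := by
    simp only [Finset.mul_sum, ← Finset.sum_add_distrib]
    exact Finset.sum_congr rfl fun i _ => by ring
  have h1 : ∑ i, w i * (a * x i + b) = a * ∑ i, w i * x i + b * ∑ i, w i := by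
    simp only [Finset.mul_sum, ← Finset.sum_add_distrib]
    exact Finset.sum_congr rfl fun i _ => by ring
  rw [h2, h1, hw]
  ring

def logVariance (q : ι → ℝ) : ℝ := ∑ i, q i * log (q i) ^ 2 - (∑ i, q i * log (q i)) ^ 2

lemma continuousOn_logVariance : ContinuousOn logVariance (stdSimplex ℝ ι) := by
  refine (continuousOn_finsetSum _ fun i _ => ?_).sub
    ((continuous_finsetSum _ fun i _ => (continuous_apply i).mul_log).continuousOn.pow 2)
  exact continuousOn_mul_log_sq.comp (continuous_apply i).continuousOn fun q hq => hq.1 i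

lemma hasDerivAt_sum_comp_line {φ φ' : ℝ → ℝ} (hφ : ∀ x, 0 < x → HasDerivAt φ (φ' x) x)
    {m v : ι → ℝ} (hv : ∀ k, v k ≠ 0 → 0 < m k) :
    HasDerivAt (fun t => ∑ k, φ (m k + t * v k)) (∑ k, φ' (m k) * v k) 0 := by
  refine HasDerivAt.fun_sum fun k _ => ?_
  by_cases hk : v k = 0
  · simpa [hk] using hasDerivAt_const (0 : ℝ) (φ (m k))
  · have hline : HasDerivAt (fun t => m k + t * v k) (v k) 0 := by
      simpa using ((hasDerivAt_id (0 : ℝ)).mul_const (v k)).const_add (m k)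
    have hφk : HasDerivAt φ (φ' (m k)) (m k + 0 * v k) := by simpa using hφ (m k) (hv k hk)
    exact hφk.comp 0 hline

lemma log_sub_log_mul_eq_zero_of_isMaxOn {m : ι → ℝ} (hm : m ∈ stdSimplex ℝ ι)
    (hmax : IsMaxOn logVariance (stdSimplex ℝ ι) m) {i j : ι} (hi : 0 < m i) (hj : 0 < m j) :
    (log (m i) - log (m j)) * (log (m i) + log (m j) + 2 - 2 * ∑ k, m k * log (m k)) = 0 := by
  classical
  set v : ι → ℝ := fun k => (if k = i then 1 else 0) - (if k = j then 1 else 0)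
  have hv_sum : ∀ c : ι → ℝ, ∑ k, c k * v k = c i - c j := by
    simp [v, mul_sub, Finset.sum_sub_distrib]
  have hv : ∀ k, v k ≠ 0 → 0 < m k := by
    intro k hk
    by_cases hki : k = i
    · exact hki ▸ hi
    by_cases hkj : k = j
    · exact hkj ▸ hj
    simp [v, hki, hkj] at hk
  set δ := min (m i) (m j)
  have hline_mem : ∀ t ∈ Ioo (-δ) δ, (fun k => m k + t * v k) ∈ stdSimplex ℝ ι := by
    rintro t ⟨ht₁, ht₂⟩
    have hδi := min_le_left (m i) (m j)
    have hδj := min_le_right (m i) (m j)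
    refine ⟨fun k => ?_, ?_⟩
    · have := hm.1 k
      simp only [v]
      split_ifs <;> subst_vars <;> linarith
    · simp only [Finset.sum_add_distrib, hm.2, hv_sum (fun _ => t), sub_self, add_zero]
  have hloc : IsLocalMax (fun t => logVariance fun k => m k + t * v k) 0 := by
    filter_upwards [Ioo_mem_nhds (neg_lt_zero.2 (lt_min hi hj)) (lt_min hi hj)] with t ht
    simpa using hmax (hline_mem t ht)
  have hderiv := ((hasDerivAt_sum_comp_line (fun x hx => hasDerivAt_mul_log_sq hx.ne') hv).sub
    ((hasDerivAt_sum_comp_line (fun x hx => hasDerivAt_mul_log hx.ne') hv).pow 2))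
  have h0 := hloc.hasDerivAt_eq_zero hderiv
  simp only [hv_sum, zero_mul, add_zero] at h0
  linear_combination h0

lemma exists_levels_of_isMaxOn {m : ι → ℝ} (hm : m ∈ stdSimplex ℝ ι)
    (hmax : IsMaxOn logVariance (stdSimplex ℝ ι) m) :
    ∃ a b : ℝ, ∀ k, m k = 0 ∨ m k = exp a ∨ m k = exp b := by
  by_cases hsupp : ∃ i, 0 < m i
  · obtain ⟨i, hi⟩ := hsupp
    refine ⟨log (m i), 2 * ∑ k, m k * log (m k) - 2 - log (m i), fun k => ?_⟩
    rcases (hm.1 k).eq_or_lt with hk | hk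
    · exact .inl hk.symm
    rw [← exp_log hk]
    rcases mul_eq_zero.1 (log_sub_log_mul_eq_zero_of_isMaxOn hm hmax hk hi) with h | h
    · exact .inr (.inl (by congr 1; linarith))
    · exact .inr (.inr (by congr 1; linarith))
  · simp only [not_exists, not_lt] at hsupp
    exact ⟨0, 0, fun k => .inl (le_antisymm (hsupp k) (hm.1 k))⟩

open Finset in
lemma exists_card_sum_eq_of_levels {m : ι → ℝ} {u w : ℝ} (h : ∀ k, m k = 0 ∨ m k = u ∨ m k = w) :
    ∃ n₁ n₂ : ℕ, n₁ + n₂ ≤ Fintype.card ι ∧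
      ∀ φ : ℝ → ℝ, φ 0 = 0 → ∑ k, φ (m k) = n₁ * φ u + n₂ * φ w := by
  classical
  refine ⟨#{k | m k = u}, #{k | m k ≠ u ∧ m k = w}, ?_, fun φ hφ => ?_⟩
  · calc #{k | m k = u} + #{k | m k ≠ u ∧ m k = w} ≤ #{k | m k = u} + #{k | ¬m k = u} :=
          Nat.add_le_add_left (Finset.card_le_card (monotone_filter_right _ fun _ _ h => h.1)) _
      _ = Fintype.card ι := card_filter_add_card_filter_not _
  · have hsplit : ∀ k, φ (m k) =
        (if m k = u then φ u else 0) + (if m k ≠ u ∧ m k = w then φ w else 0) := by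
      intro k
      rcases h k with h | h | h <;> split_ifs <;> simp_all
    rw [sum_congr rfl fun k _ => hsplit k, sum_add_distrib, ← sum_filter, ← sum_filter]
    simp only [sum_const, nsmul_eq_mul]

end LogVariance

lemma logVariance_le_Nfun {d : ℕ} (hd : 2 ≤ d) {q : Fin d → ℝ} (hq : q ∈ stdSimplex ℝ (Fin d)) :
    logVariance q ≤ Nfun d := by
  obtain ⟨m, hm, hmax⟩ :=
    (isCompact_stdSimplex ℝ (Fin d)).exists_isMaxOn ⟨q, hq⟩ continuousOn_logVariance
  obtain ⟨a, b, hlevels⟩ := exists_levels_of_isMaxOn hm hmax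
  obtain ⟨n₁, n₂, hn, hsum⟩ := exists_card_sum_eq_of_levels hlevels
  have hmass : n₁ * exp a + n₂ * exp b = 1 := (hsum id rfl).symm.trans hm.2
  have hvar : logVariance m = n₁ * exp a * (n₂ * exp b) * (a - b) ^ 2 := by
    rw [logVariance, hsum (fun x => x * log x ^ 2) (by simp), hsum (fun x => x * log x) (by simp),
      log_exp, log_exp]
    linear_combination -(n₁ * exp a * a ^ 2 + n₂ * exp b * b ^ 2) * hmass
  calc logVariance q ≤ logVariance m := hmax hq
    _ = n₁ * exp a * (n₂ * exp b) * (a - b) ^ 2 := hvar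
    _ ≤ Nfun d := mul_mul_sq_sub_le_Nfun hd (by simpa using hn) hmass

lemma softmax_mem_stdSimplex {ι : Type*} [Fintype ι] [Nonempty ι] {θ p : ι → ℝ}
    (hp : ∀ i, p i = exp (θ i) / ∑ j, exp (θ j)) : p ∈ stdSimplex ℝ ι := by
  have hZ : 0 < ∑ j, exp (θ j) := Finset.sum_pos (fun j _ => exp_pos _) Finset.univ_nonempty
  refine ⟨fun i => (hp i).symm ▸ by positivity, ?_⟩
  simp_rw [hp, ← Finset.sum_div]
  exact div_self hZ.ne'

/-- maximum heat capacity in `d` dimensions. -/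
theorem heat_capacity_le (d : ℕ) (hd : 2 ≤ d) (E : Fin d → ℝ) (T : ℝ) (hT : 0 < T)
    (p : Fin d → ℝ)
    (hp : ∀ i, p i = Real.exp (-(E i) / T) / ∑ j, Real.exp (-(E j) / T)) :
    (∑ i, p i * (E i)^2 - (∑ i, p i * E i)^2) / T^2 ≤ Nfun d ∧
    Nfun d < (1/4) * (Real.log ((d:ℝ) - 1))^2 + 1 := by
  have : Nonempty (Fin d) := ⟨⟨0, by omega⟩⟩
  have hp_mem := softmax_mem_stdSimplex hp
  set Z := ∑ j, exp (-(E j) / T)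
  have hZ : 0 < Z := Finset.sum_pos (fun j _ => exp_pos _) Finset.univ_nonempty
  have hE : E = fun i => -T * log (p i) + -T * log Z := by
    funext i
    rw [hp i, log_div (exp_ne_zero _) hZ.ne', log_exp]
    field_simp
    ring
  refine ⟨?_, Nfun_lt_quarter_log_sq_add_one hd⟩
  rw [hE, sum_mul_affine_sq_sub_sq hp_mem.2, neg_sq, mul_div_cancel_left₀ _ (by positivity)]
  exact logVariance_le_Nfun hd hp_mem

end
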